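/- arXiv:2108.07669 — 10 statements merged into one kernel-verified Lean document; each statement's English description precedes it below -/
import Mathlib

section
/- For the program Π = { p ← K p }, the only G11-world view is {∅}; in particular {{p}} is not a G11-world view, since the G11-reduct of Π with respect to {{p}} is the tautology p ← p, whose unique stable model is ∅. -/
open scoped Classical

/-- Propositional modal formulas over atoms `α`. -/
inductive Formula (α : Type) : Type
  | bot  : Formula α
  | top  : Formula α
  | atom : α → Formula α
  | and  : Formula α → Formula α → Formula α
  | or   : Formula α → Formula α → Formula α
  | imp  : Formula α → Formula α → Formula α
  | K    : Formula α → Formula α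

namespace Formula

variable {α : Type}

/-- default negation: `not F := F → ⊥` -/
def neg (F : Formula α) : Formula α := imp F bot

/-- `M F := not K not F` -/
def M (F : Formula α) : Formula α := neg (K (neg F))

/-- classical (S5/KD45-style) belief satisfaction `⟨W,I⟩ ⊨ F` -/
def sat (W : Set (Set α)) : Set α → Formula α → Prop
  | _, .bot => False
  | _, .top => True
  | I, .atom a => a ∈ I
  | I, .and F G => sat W I F ∧ sat W I G
  | I, .or F G => sat W I F ∨ sat W I G
  | I, .imp F G => sat W I F → sat W I G
  | _, .K F => ∀ I' ∈ W, sat W I' F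

/-- `W ⊨ F` -/
def wsat (W : Set (Set α)) (F : Formula α) : Prop := ∀ I ∈ W, sat W I F

/-- here-and-there satisfaction (used on objective formulas: reducts are `K`-free) -/
def htSat : Set α → Set α → Formula α → Prop
  | _, _, .bot => False
  | _, _, .top => True
  | H, _, .atom a => a ∈ H
  | H, T, .and F G => htSat H T F ∧ htSat H T G
  | H, T, .or F G => htSat H T F ∨ htSat H T G
  | H, T, .imp F G => (htSat H T F → htSat H T G) ∧ (htSat T T F → htSat T T G)
  | _, _, .K _ => False

/-- stable (equilibrium) models of an objective theory -/
def stableModel (Γ : Set (Formula α)) (I : Set α) : Prop :=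
  (∀ F ∈ Γ, htSat I I F) ∧ ∀ H : Set α, H ⊂ I → ∃ F ∈ Γ, ¬ htSat H I F

def stableModels (Γ : Set (Formula α)) : Set (Set α) := { I | stableModel Γ I }

/-- G94 reduct: each maximal subformula `K G` is replaced by `⊤` if `W ⊨ K G`, else by `⊥`. -/
noncomputable def g94Reduct (W : Set (Set α)) : Formula α → Formula α
  | .bot => bot
  | .top => top
  | .atom a => atom a
  | .and F G => and (g94Reduct W F) (g94Reduct W G)
  | .or F G => or (g94Reduct W F) (g94Reduct W G)
  | .imp F G => imp (g94Reduct W F) (g94Reduct W G)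
  | .K F => if ∀ I ∈ W, sat W I F then top else bot

/-- G94 world views -/
def G94wv (Γ : Set (Formula α)) (W : Set (Set α)) : Prop :=
  W.Nonempty ∧ W = stableModels ((g94Reduct W) '' Γ)

/-- K15 reduct: each maximal subformula `K F` is replaced by `F` if `W ⊨ K F`, else by `⊥`. -/
noncomputable def k15Reduct (W : Set (Set α)) : Formula α → Formula α
  | .bot => bot
  | .top => top
  | .atom a => atom a
  | .and F G => and (k15Reduct W F) (k15Reduct W G)
  | .or F G => or (k15Reduct W F) (k15Reduct W G)
  | .imp F G => imp (k15Reduct W F) (k15Reduct W G)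
  | .K F => if ∀ I ∈ W, sat W I F then F else bot

/-- K15 world views -/
def K15wv (Γ : Set (Formula α)) (W : Set (Set α)) : Prop :=
  W.Nonempty ∧ W = stableModels ((k15Reduct W) '' Γ)

end Formula

/-- the atom `p` -/
def pAtom : Formula ℕ := Formula.atom 0

/-- the program Π = { p ← K p } -/
def progKp : Set (Formula ℕ) := {Formula.imp (Formula.K pAtom) pAtom}

/-- The G11-reduct of Π = { p ← K p } with respect to `W`:
if `W ⊨ K p` the subjective literal `K p` is replaced by the objective literal `p`
(yielding the tautology `p ← p`); otherwise it is replaced by `⊥` (yielding `p ← ⊥`). -/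
noncomputable def g11ReductKp (W : Set (Set ℕ)) : Set (Formula ℕ) :=
  if Formula.wsat W (Formula.K pAtom) then {Formula.imp pAtom pAtom}
  else {Formula.imp Formula.bot pAtom}

/-- G11-world views of the program Π = { p ← K p } -/
def G11wvKp (W : Set (Set ℕ)) : Prop :=
  W.Nonempty ∧ W = Formula.stableModels (g11ReductKp W)

lemma stableModels_triv (F : Formula ℕ) (h : ∀ H T : Set ℕ, Formula.htSat H T F) :
    Formula.stableModels {F} = {(∅ : Set ℕ)} := by
  ext I
  simp only [Formula.stableModels, Formula.stableModel, Set.mem_setOf_eq,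
    Set.mem_singleton_iff]
  constructor
  · rintro ⟨_, hmin⟩
    by_contra hne
    obtain ⟨G, hG, hns⟩ := hmin ∅ ((Set.empty_subset I).ssubset_of_ne (Ne.symm hne))
    subst hG
    exact hns (h _ _)
  · rintro rfl
    refine ⟨fun G hG => ?_, fun H hH => absurd (Set.subset_empty_iff.mp hH.subset) hH.ne⟩
    subst hG; exact h _ _

lemma htSat_impp (H T : Set ℕ) : Formula.htSat H T (Formula.imp pAtom pAtom) :=
  ⟨id, id⟩

lemma htSat_impbot (H T : Set ℕ) :
    Formula.htSat H T (Formula.imp Formula.bot pAtom) :=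
  ⟨fun h => h.elim, fun h => h.elim⟩

lemma sm_reduct (W : Set (Set ℕ)) :
    Formula.stableModels (g11ReductKp W) = {(∅ : Set ℕ)} := by
  unfold g11ReductKp
  split
  · exact stableModels_triv _ htSat_impp
  · exact stableModels_triv _ htSat_impbot

/-- the only G11-world view of `{ p ← K p }` is `{∅}`; in particular `{{p}}`
is not a G11-world view, since the G11-reduct w.r.t. `{{p}}` is the tautology `p ← p`,
whose unique stable model is `∅`. -/
theorem g11wv_of_selfSupport :
    (∀ W : Set (Set ℕ), G11wvKp W ↔ W = {(∅ : Set ℕ)}) ∧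
    ¬ G11wvKp {({0} : Set ℕ)} ∧
    g11ReductKp {({0} : Set ℕ)} = {Formula.imp pAtom pAtom} ∧
    Formula.stableModels {Formula.imp pAtom pAtom} = {(∅ : Set ℕ)} := by
  have hmain : ∀ W : Set (Set ℕ), G11wvKp W ↔ W = {(∅ : Set ℕ)} := by
    intro W
    constructor
    · rintro ⟨hne, heq⟩
      rw [sm_reduct W] at heq; exact heq
    · rintro rfl
      exact ⟨⟨∅, rfl⟩, (sm_reduct _).symm⟩
  refine ⟨hmain, ?_, ?_, stableModels_triv _ htSat_impp⟩
  · intro h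
    have := (hmain _).mp h
    have h0 : ({0} : Set ℕ) = (∅ : Set ℕ) := by
      rw [Set.singleton_eq_singleton_iff] at this; exact this
    exact absurd h0 (by simp)
  · unfold g11ReductKp
    rw [if_pos]
    intro I hI
    rw [Set.mem_singleton_iff] at hI; subst hI
    intro I' hI'
    rw [Set.mem_singleton_iff] at hI'; subst hI'
    show (0 : ℕ) ∈ ({0} : Set ℕ); simp
end

section
/- For the program Π = { p ∨ q ; ⊥ ← not K p } the epistemic interpretation {{p}} is a K15-world view of Π, but the subprogram { p ∨ q } has the unique world view {{p},{q}}, which does not satisfy K p. Hence the K15 semantics violates subjective constraint monotonicity. -/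
open scoped Classical

def qAtom : Formula ℕ := Formula.atom 1

/-- the program Π = { p ∨ q ; ⊥ ← not K p } -/
def progC : Set (Formula ℕ) :=
  {Formula.or pAtom qAtom,
   Formula.imp (Formula.neg (Formula.K pAtom)) Formula.bot}

/-- the subprogram { p ∨ q } -/
def progD : Set (Formula ℕ) := {Formula.or pAtom qAtom}

/-- the K15-reduct of Π wrt {{p}} -/
def Gamma1 : Set (Formula ℕ) :=
  {Formula.or pAtom qAtom,
   Formula.imp (Formula.imp pAtom Formula.bot) Formula.bot}

lemma sm_d (I : Set ℕ) :
    Formula.stableModel progD I ↔ I = {0} ∨ I = {1} := by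
  constructor
  · rintro ⟨hsat, hmin⟩
    have h := hsat _ rfl
    simp [Formula.htSat, pAtom, qAtom] at h
    rcases h with h0 | h1
    · left
      by_contra hne
      have hss : ({0} : Set ℕ) ⊂ I :=
        (Set.singleton_subset_iff.2 h0).ssubset_of_ne (fun h => hne h.symm)
      obtain ⟨F, hF, hns⟩ := hmin _ hss
      rcases hF with rfl
      apply hns
      simp [Formula.htSat, pAtom, qAtom]
    · right
      by_contra hne
      have hss : ({1} : Set ℕ) ⊂ I :=
        (Set.singleton_subset_iff.2 h1).ssubset_of_ne (fun h => hne h.symm)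
      obtain ⟨F, hF, hns⟩ := hmin _ hss
      rcases hF with rfl
      apply hns
      simp [Formula.htSat, pAtom, qAtom]
  · rintro (rfl | rfl) <;>
    · refine ⟨?_, ?_⟩
      · rintro F rfl
        simp [Formula.htSat, pAtom, qAtom]
      · intro H hss
        refine ⟨_, rfl, ?_⟩
        have hH : H = ∅ := Set.ssubset_singleton_iff.1 hss
        subst hH
        simp [Formula.htSat, pAtom, qAtom]

lemma sm_c (I : Set ℕ) :
    Formula.stableModel Gamma1 I ↔ I = {0} := by
  constructor
  · rintro ⟨hsat, hmin⟩
    have h2 := hsat _ (Or.inr rfl)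
    simp [Formula.htSat, pAtom] at h2
    by_contra hne
    have hss : ({0} : Set ℕ) ⊂ I :=
      (Set.singleton_subset_iff.2 h2).ssubset_of_ne (fun h => hne h.symm)
    obtain ⟨F, hF, hns⟩ := hmin _ hss
    rcases hF with rfl | rfl
    · apply hns
      simp [Formula.htSat, pAtom, qAtom]
    · apply hns
      simp [Formula.htSat, pAtom, h2]
  · rintro rfl
    refine ⟨?_, ?_⟩
    · rintro F (rfl | rfl) <;> simp [Formula.htSat, pAtom, qAtom]
    · intro H hss
      refine ⟨_, Or.inl rfl, ?_⟩
      have hH : H = ∅ := Set.ssubset_singleton_iff.1 hss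
      subst hH
      simp [Formula.htSat, pAtom, qAtom]

lemma imgD (W : Set (Set ℕ)) :
    (Formula.k15Reduct W) '' progD = progD := by
  simp [progD, Set.image_singleton, Formula.k15Reduct, pAtom, qAtom]

lemma smD_set : Formula.stableModels progD = {({0} : Set ℕ), ({1} : Set ℕ)} := by
  ext I
  exact sm_d I

/-- `{{p}}` is a K15-world view of Π, but the subprogram `{ p ∨ q }` has
the unique world view `{{p},{q}}`, which does not satisfy `K p`; hence K15 violates
subjective constraint monotonicity. -/
theorem k15_violates_constraint_monotonicity :
    Formula.K15wv progC {({0} : Set ℕ)} ∧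
    (∀ W : Set (Set ℕ),
        Formula.K15wv progD W ↔ W = {({0} : Set ℕ), ({1} : Set ℕ)}) ∧
    ¬ Formula.wsat {({0} : Set ℕ), ({1} : Set ℕ)} (Formula.K pAtom) := by
  refine ⟨⟨⟨{0}, rfl⟩, ?_⟩, ?_, ?_⟩
  · have hcond : ∀ I ∈ ({({0} : Set ℕ)} : Set (Set ℕ)),
        Formula.sat {({0} : Set ℕ)} I pAtom := by
      rintro I rfl
      simp [Formula.sat, pAtom]
    have himg : (Formula.k15Reduct {({0} : Set ℕ)}) '' progC = Gamma1 := by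
      simp [progC, Gamma1, Set.image_insert_eq, Set.image_singleton,
        Formula.k15Reduct, Formula.neg, Formula.sat, pAtom, qAtom]
    rw [himg]
    ext I
    exact (sm_c I).symm
  · intro W
    constructor
    · rintro ⟨hne, hW⟩
      rw [imgD] at hW
      rw [hW, smD_set]
    · rintro rfl
      refine ⟨⟨{0}, Or.inl rfl⟩, ?_⟩
      rw [imgD, smD_set]
  · intro h
    have h1 := h {1} (Or.inr rfl) {1} (Or.inr rfl)
    simp [Formula.sat, pAtom] at h1
end

section
/- Define the reflexive embedding (·)^B on propositional modal formulas by: a^B = a for atoms and ⊥; (F ⊗ G)^B = F^B ⊗ G^B for ⊗ ∈ {∧,∨,→}; (K F)^B = F^B ∧ K F^B. Then for every ground program Π and every epistemic interpretation W, the K15-reduct of Π with respect to W is (classically/stable-model) equivalent to the G94-reduct of Π^B with respect to W; consequently the K15-world views of Π coincide with the G94-world views of Π^B. -/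
open scoped Classical

namespace Formula

variable {α : Type}

/-- `K`-free (objective) formulas -/
def objectiveF : Formula α → Prop
  | .bot => True
  | .top => True
  | .atom _ => True
  | .and F G => objectiveF F ∧ objectiveF G
  | .or F G => objectiveF F ∧ objectiveF G
  | .imp F G => objectiveF F ∧ objectiveF G
  | .K _ => False

/-- every subformula `K F` has a `K`-free argument `F`
(as in ground programs, where `K` is applied only to objective literals) -/
def flatK : Formula α → Prop
  | .bot => True
  | .top => True
  | .atom _ => True
  | .and F G => flatK F ∧ flatK G
  | .or F G => flatK F ∧ flatK G
  | .imp F G => flatK F ∧ flatK G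
  | .K F => objectiveF F

/-- the reflexive embedding `(·)^B`: `(K F)^B = F^B ∧ K F^B` -/
def embB : Formula α → Formula α
  | .bot => bot
  | .top => top
  | .atom a => atom a
  | .and F G => and (embB F) (embB G)
  | .or F G => or (embB F) (embB G)
  | .imp F G => imp (embB F) (embB G)
  | .K F => and (embB F) (K (embB F))

/-- the embedding `(·)^K`: `(K F)^K = M K F^K` -/
def embK : Formula α → Formula α
  | .bot => bot
  | .top => top
  | .atom a => atom a
  | .and F G => and (embK F) (embK G)
  | .or F G => or (embK F) (embK G)
  | .imp F G => imp (embK F) (embK G)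
  | .K F => M (K (embK F))

end Formula

namespace Formula
variable {α : Type}

lemma embB_obj : ∀ {F : Formula α}, objectiveF F → embB F = F := by
  intro F h
  induction F with
  | bot => rfl
  | top => rfl
  | atom a => rfl
  | and F G ihF ihG => simp [embB, ihF h.1, ihG h.2]
  | or F G ihF ihG => simp [embB, ihF h.1, ihG h.2]
  | imp F G ihF ihG => simp [embB, ihF h.1, ihG h.2]
  | K F ih => exact absurd h (by simp [objectiveF])

lemma g94_obj (W : Set (Set α)) : ∀ {F : Formula α}, objectiveF F → g94Reduct W F = F := by
  intro F h
  induction F with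
  | bot => rfl
  | top => rfl
  | atom a => rfl
  | and F G ihF ihG => simp [g94Reduct, ihF h.1, ihG h.2]
  | or F G ihF ihG => simp [g94Reduct, ihF h.1, ihG h.2]
  | imp F G ihF ihG => simp [g94Reduct, ihF h.1, ihG h.2]
  | K F ih => exact absurd h (by simp [objectiveF])

lemma key (W : Set (Set α)) : ∀ {F : Formula α}, flatK F →
    ∀ H T : Set α, (htSat H T (k15Reduct W F) ↔ htSat H T (g94Reduct W (embB F))) := by
  intro F h
  induction F with
  | bot => intro H T; rfl
  | top => intro H T; rfl
  | atom a => intro H T; rfl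
  | and F G ihF ihG =>
      intro H T
      simp only [k15Reduct, embB, g94Reduct, htSat]
      exact and_congr (ihF h.1 H T) (ihG h.2 H T)
  | or F G ihF ihG =>
      intro H T
      simp only [k15Reduct, embB, g94Reduct, htSat]
      exact or_congr (ihF h.1 H T) (ihG h.2 H T)
  | imp F G ihF ihG =>
      intro H T
      simp only [k15Reduct, embB, g94Reduct, htSat]
      exact and_congr (imp_congr (ihF h.1 H T) (ihG h.2 H T))
        (imp_congr (ihF h.1 T T) (ihG h.2 T T))
  | K F ih =>
      intro H T
      have hobj : objectiveF F := h
      rw [show embB (K F) = and (embB F) (K (embB F)) from rfl,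
        embB_obj hobj]
      simp only [k15Reduct, g94Reduct, g94_obj W hobj]
      by_cases hc : ∀ I ∈ W, sat W I F
      · rw [if_pos hc, if_pos hc]; simp only [htSat]; tauto
      · rw [if_neg hc, if_neg hc]; simp only [htSat]; tauto

end Formula

/-- for every ground program Π (every `K` applied to an objective formula)
and every epistemic interpretation `W`, the K15-reduct of Π w.r.t. `W` has the same stable
models as the G94-reduct of `Π^B` w.r.t. `W`; consequently the K15-world views of Π coincide
with the G94-world views of `Π^B`. -/
theorem k15_eq_g94_of_embB {α : Type} (Γ : Set (Formula α))
    (hΓ : ∀ F ∈ Γ, Formula.flatK F) (W : Set (Set α)) (hW : W.Nonempty) :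
    Formula.stableModels ((Formula.k15Reduct W) '' Γ) =
      Formula.stableModels ((Formula.g94Reduct W) '' (Formula.embB '' Γ)) ∧
    (Formula.K15wv Γ W ↔ Formula.G94wv (Formula.embB '' Γ) W) := by
  have hkey : ∀ F ∈ Γ, ∀ H T : Set α,
      Formula.htSat H T (Formula.k15Reduct W F) ↔
        Formula.htSat H T (Formula.g94Reduct W (Formula.embB F)) :=
    fun F hF => Formula.key W (hΓ F hF)
  have hset : Formula.stableModels ((Formula.k15Reduct W) '' Γ) =
      Formula.stableModels ((Formula.g94Reduct W) '' (Formula.embB '' Γ)) := by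
    ext I
    simp only [Formula.stableModels, Set.mem_setOf_eq, Formula.stableModel,
      Set.image_image, Set.forall_mem_image, Set.exists_mem_image]
    constructor
    · rintro ⟨h1, h2⟩
      refine ⟨fun F hF => (hkey F hF I I).mp (h1 hF), fun H hH => ?_⟩
      obtain ⟨G, hG, hns⟩ := h2 H hH
      exact ⟨G, hG, fun c => hns ((hkey G hG H I).mpr c)⟩
    · rintro ⟨h1, h2⟩
      refine ⟨fun F hF => (hkey F hF I I).mpr (h1 hF), fun H hH => ?_⟩
      obtain ⟨G, hG, hns⟩ := h2 H hH
      exact ⟨G, hG, fun c => hns ((hkey G hG H I).mp c)⟩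
  refine ⟨hset, ?_⟩
  unfold Formula.K15wv Formula.G94wv
  rw [hset]
end

section
/- Define the embedding (·)^K by: a^K = a for atoms and ⊥; (F ⊗ G)^K = F^K ⊗ G^K for ⊗ ∈ {∧,∨,→}; (K F)^K = M K F^K, where M G := ¬K¬G. Then for every epistemic interpretation W and every formula F, the G94-reduct of K F with respect to W is classically equivalent to the G94-reduct of ((K F)^K)^B with respect to W; consequently the G94-world views of any theory Γ coincide with the G94-world views of (Γ^K)^B, i.e., with the K15-world views of Γ^K. -/
open scoped Classical

namespace Formula

variable {α : Type} {W : Set (Set α)}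

lemma sat_embK (hW : W.Nonempty) : ∀ (F : Formula α) (I : Set α),
    sat W I (embK F) ↔ sat W I F := by
  intro F
  induction F with
  | bot => intro I; simp [embK, sat]
  | top => intro I; simp [embK, sat]
  | atom a => intro I; simp [embK, sat]
  | and F G ihF ihG => intro I; simp [embK, sat, ihF, ihG]
  | or F G ihF ihG => intro I; simp [embK, sat, ihF, ihG]
  | imp F G ihF ihG => intro I; simp [embK, sat, ihF, ihG]
  | K F ih =>
      intro I
      obtain ⟨I0, hI0⟩ := hW
      by_cases hc : ∀ I' ∈ W, sat W I' F <;>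
        simp only [embK, M, neg, sat, ih] <;> tauto

lemma sat_embB_embK (hW : W.Nonempty) : ∀ (F : Formula α) (I : Set α),
    sat W I (embB (embK F)) ↔ sat W I F := by
  intro F
  induction F with
  | bot => intro I; simp [embK, embB, sat]
  | top => intro I; simp [embK, embB, sat]
  | atom a => intro I; simp [embK, embB, sat]
  | and F G ihF ihG => intro I; simp [embK, embB, sat, ihF, ihG]
  | or F G ihF ihG => intro I; simp [embK, embB, sat, ihF, ihG]
  | imp F G ihF ihG => intro I; simp [embK, embB, sat, ihF, ihG]
  | K F ih =>
      intro I
      obtain ⟨I0, hI0⟩ := hW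
      simp only [embK, M, neg, embB, sat, ih]
      by_cases hc : ∀ I' ∈ W, sat W I' F
      · exact ⟨fun _ => hc, fun _ h => h.2 I0 hI0 ⟨hc I0 hI0, hc⟩⟩
      · exact ⟨fun hL => (hL ⟨fun hx => hc hx.2, fun I' _ hx => hc hx.2⟩).elim,
          fun hR => (hc hR).elim⟩

lemma ht_g94_embB_embK (hW : W.Nonempty) : ∀ (F : Formula α) (H T : Set α),
    htSat H T (g94Reduct W (embB (embK F))) ↔ htSat H T (g94Reduct W F) := by
  intro F
  induction F with
  | bot => intro H T; simp [embK, embB, g94Reduct]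
  | top => intro H T; simp [embK, embB, g94Reduct]
  | atom a => intro H T; simp [embK, embB, g94Reduct]
  | and F G ihF ihG => intro H T; simp [embK, embB, g94Reduct, htSat, ihF, ihG]
  | or F G ihF ihG => intro H T; simp [embK, embB, g94Reduct, htSat, ihF, ihG]
  | imp F G ihF ihG => intro H T; simp [embK, embB, g94Reduct, htSat, ihF, ihG]
  | K F ih =>
      intro H T
      obtain ⟨I0, hI0⟩ := hW
      by_cases hc : ∀ I' ∈ W, sat W I' F
      · have hc1 : ∀ I' ∈ W, sat W I' (embB (embK F)) := by
          intro I' hI'; exact (sat_embB_embK ⟨I0, hI0⟩ F I').2 (hc I' hI')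
        have hc2 : ¬ ∀ I' ∈ W, sat W I'
            (imp (and (embB (embK F)) (K (embB (embK F)))) bot) := by
          intro h
          exact h I0 hI0 ⟨hc1 I0 hI0, hc1⟩
        simp only [embK, M, neg, embB, g94Reduct, if_pos hc, if_pos hc1, if_neg hc2]
        simp [htSat]
      · have hc1 : ¬ ∀ I' ∈ W, sat W I' (embB (embK F)) := by
          intro h; exact hc (fun I' hI' => (sat_embB_embK ⟨I0, hI0⟩ F I').1 (h I' hI'))
        have hc2 : ∀ I' ∈ W, sat W I'
            (imp (and (embB (embK F)) (K (embB (embK F)))) bot) := by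
          intro I' hI' hcontra
          exact hc1 hcontra.2
        simp only [embK, M, neg, embB, g94Reduct, if_neg hc, if_neg hc1, if_pos hc2]
        simp [htSat]

lemma ht_k15_embK (hW : W.Nonempty) : ∀ (F : Formula α) (H T : Set α),
    htSat H T (k15Reduct W (embK F)) ↔
      htSat H T (g94Reduct W (embB (embK F))) := by
  intro F
  induction F with
  | bot => intro H T; simp [embK, embB, g94Reduct, k15Reduct]
  | top => intro H T; simp [embK, embB, g94Reduct, k15Reduct]
  | atom a => intro H T; simp [embK, embB, g94Reduct, k15Reduct]
  | and F G ihF ihG =>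
      intro H T; simp [embK, embB, g94Reduct, k15Reduct, htSat, ihF, ihG]
  | or F G ihF ihG =>
      intro H T; simp [embK, embB, g94Reduct, k15Reduct, htSat, ihF, ihG]
  | imp F G ihF ihG =>
      intro H T; simp [embK, embB, g94Reduct, k15Reduct, htSat, ihF, ihG]
  | K F ih =>
      intro H T
      obtain ⟨I0, hI0⟩ := hW
      have hA : ∀ H' T' : Set α, htSat H' T' (imp (K (embK F)) bot) := by
        intro H' T'
        exact ⟨fun h => h.elim, fun h => h.elim⟩
      by_cases hc : ∀ I' ∈ W, sat W I' (embK F)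
      · -- W ⊨ K (embK F)
        have hc1 : ∀ I' ∈ W, sat W I' (embB (embK F)) := by
          intro I' hI'
          exact (sat_embB_embK ⟨I0, hI0⟩ F I').2 ((sat_embK ⟨I0, hI0⟩ F I').1 (hc I' hI'))
        have hcA : ¬ ∀ I' ∈ W, sat W I' (imp (K (embK F)) bot) := by
          intro h; exact h I0 hI0 hc
        have hc2 : ¬ ∀ I' ∈ W, sat W I'
            (imp (and (embB (embK F)) (K (embB (embK F)))) bot) := by
          intro h
          exact h I0 hI0 ⟨hc1 I0 hI0, hc1⟩
        simp only [embK, M, neg, embB, g94Reduct, k15Reduct,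
          if_neg hcA, if_pos hc1, if_neg hc2]
        simp [htSat]
      · have hc1 : ¬ ∀ I' ∈ W, sat W I' (embB (embK F)) := by
          intro h
          exact hc (fun I' hI' => (sat_embK ⟨I0, hI0⟩ F I').2
            ((sat_embB_embK ⟨I0, hI0⟩ F I').1 (h I' hI')))
        have hcA : ∀ I' ∈ W, sat W I' (imp (K (embK F)) bot) := by
          intro I' hI' hcontra; exact hc hcontra
        have hc2 : ∀ I' ∈ W, sat W I'
            (imp (and (embB (embK F)) (K (embB (embK F)))) bot) := by
          intro I' hI' hcontra
          exact hc1 hcontra.2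
        simp only [embK, M, neg, embB, g94Reduct, k15Reduct,
          if_pos hcA, if_neg hc1, if_pos hc2]
        simp [htSat]

lemma stableModels_congr (r1 r2 : Formula α → Formula α) (Γ : Set (Formula α))
    (h : ∀ F ∈ Γ, ∀ H T : Set α, htSat H T (r1 F) ↔ htSat H T (r2 F)) :
    stableModels (r1 '' Γ) = stableModels (r2 '' Γ) := by
  ext I
  simp only [stableModels, Set.mem_setOf_eq, stableModel, Set.mem_image,
    forall_exists_index, and_imp]
  constructor
  · rintro ⟨h1, h2⟩
    refine ⟨?_, ?_⟩
    · rintro G F hF rfl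
      exact (h F hF I I).mp (h1 (r1 F) F hF rfl)
    · intro H hH
      obtain ⟨G, ⟨F, hF, rfl⟩, hG⟩ := h2 H hH
      exact ⟨r2 F, ⟨F, hF, rfl⟩, fun hcon => hG ((h F hF H I).mpr hcon)⟩
  · rintro ⟨h1, h2⟩
    refine ⟨?_, ?_⟩
    · rintro G F hF rfl
      exact (h F hF I I).mpr (h1 (r2 F) F hF rfl)
    · intro H hH
      obtain ⟨G, ⟨F, hF, rfl⟩, hG⟩ := h2 H hH
      exact ⟨r1 F, ⟨F, hF, rfl⟩, fun hcon => hG ((h F hF H I).mp hcon)⟩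

end Formula

/-- for every `W` and formula `F`, the G94-reduct of `K F` w.r.t. `W` is
classically equivalent to the G94-reduct of `((K F)^K)^B` w.r.t. `W` (reducts are `K`-free,
so classical satisfaction in an interpretation `I` is `htSat I I`); consequently the
G94-world views of any theory Γ coincide with the G94-world views of `(Γ^K)^B`, i.e. with
the K15-world views of `Γ^K`. -/
theorem g94_eq_k15_of_embK {α : Type} (W : Set (Set α)) (hW : W.Nonempty) :
    (∀ (F : Formula α) (I : Set α),
        Formula.htSat I I (Formula.g94Reduct W (Formula.K F)) ↔
          Formula.htSat I I (Formula.g94Reduct W (Formula.embB (Formula.embK (Formula.K F))))) ∧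
    (∀ Γ : Set (Formula α),
        (Formula.G94wv Γ W ↔
          Formula.G94wv ((fun F => Formula.embB (Formula.embK F)) '' Γ) W) ∧
        (Formula.G94wv Γ W ↔ Formula.K15wv (Formula.embK '' Γ) W)) := by
  constructor
  · intro F I
    exact (Formula.ht_g94_embB_embK hW (Formula.K F) I I).symm
  · intro Γ
    have himg : (Formula.g94Reduct W) '' ((fun F => Formula.embB (Formula.embK F)) '' Γ)
        = (fun F => Formula.g94Reduct W (Formula.embB (Formula.embK F))) '' Γ := by
      rw [← Set.image_comp]; rfl
    have himg2 : (Formula.k15Reduct W) '' (Formula.embK '' Γ)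
        = (fun F => Formula.k15Reduct W (Formula.embK F)) '' Γ := by
      rw [← Set.image_comp]; rfl
    have hst1 : Formula.stableModels ((Formula.g94Reduct W) '' Γ)
        = Formula.stableModels ((fun F => Formula.g94Reduct W (Formula.embB (Formula.embK F))) '' Γ) :=
      Formula.stableModels_congr _ _ Γ
        (fun F _ H T => (Formula.ht_g94_embB_embK hW F H T).symm)
    have hst2 : Formula.stableModels ((Formula.g94Reduct W) '' Γ)
        = Formula.stableModels ((fun F => Formula.k15Reduct W (Formula.embK F)) '' Γ) :=
      Formula.stableModels_congr _ _ Γ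
        (fun F _ H T => ((Formula.ht_k15_embK hW F H T).trans
          (Formula.ht_g94_embB_embK hW F H T)).symm)
    constructor
    · unfold Formula.G94wv
      rw [himg, ← hst1]
    · unfold Formula.G94wv Formula.K15wv
      rw [himg2, ← hst2]
end

section
/- For every epistemic interpretation W and every propositional modal formula F: W ⊨ K F if and only if W ⊨ K (F^K)^B, where (·)^K replaces each K G by M K G^K and (·)^B replaces each K G by G^B ∧ K G^B. -/
open scoped Classical

lemma sat_embB_embK {α : Type} (W : Set (Set α)) (hW : W.Nonempty) :
    ∀ F : Formula α, ∀ I ∈ W,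
      Formula.sat W I F ↔ Formula.sat W I (Formula.embB (Formula.embK F)) := by
  intro F
  induction F with
  | bot => intro I hI; simp [Formula.embK, Formula.embB]
  | top => intro I hI; simp [Formula.embK, Formula.embB]
  | atom a => intro I hI; simp [Formula.embK, Formula.embB]
  | and F G ihF ihG =>
      intro I hI
      simp only [Formula.embK, Formula.embB, Formula.sat]
      rw [ihF I hI, ihG I hI]
  | or F G ihF ihG =>
      intro I hI
      simp only [Formula.embK, Formula.embB, Formula.sat]
      rw [ihF I hI, ihG I hI]
  | imp F G ihF ihG =>
      intro I hI
      simp only [Formula.embK, Formula.embB, Formula.sat]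
      rw [ihF I hI, ihG I hI]
  | K F ih =>
      intro I hI
      simp only [Formula.embK, Formula.embB, Formula.M, Formula.neg, Formula.sat]
      constructor
      · intro h hcon
        obtain ⟨I0, hI0⟩ := hW
        have := hcon.2 I0 hI0
        exact this ⟨(ih I0 hI0).mp (h I0 hI0), fun I' hI' => (ih I' hI').mp (h I' hI')⟩
      · intro h I' hI'
        by_contra hc
        apply h
        constructor
        · rintro ⟨_, hall⟩
          exact hc ((ih I' hI').mpr (hall I' hI'))
        · rintro J hJ ⟨_, hall⟩
          exact hc ((ih I' hI').mpr (hall I' hI'))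

/-- `W ⊨ K F` iff `W ⊨ K (F^K)^B`. -/
theorem wsat_K_iff_embKB {α : Type} (W : Set (Set α)) (hW : W.Nonempty) (F : Formula α) :
    Formula.wsat W (Formula.K F) ↔
      Formula.wsat W (Formula.K (Formula.embB (Formula.embK F))) := by
  constructor
  · intro h I hI I' hI'
    exact (sat_embB_embK W hW F I' hI').mp (h I hI I' hI')
  · intro h I hI I' hI'
    exact (sat_embB_embK W hW F I' hI').mpr (h I hI I' hI')
end

section
/- If a semantics S satisfies the epistemic splitting property, then S satisfies subjective constraint monotonicity: for any ground program Π and any set C of subjective constraints (rules ⊥ ← L1,…,Ln with all Li subjective literals), W is an S-world view of Π ∪ C iff W is an S-world view of Π and W ⊨ C. -/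
open scoped Classical

/-- Objective literals: truth constants, atoms, and atoms under one or two default negations. -/
inductive OLit (α : Type) : Type
  | otop : OLit α
  | obot : OLit α
  | atom : α → OLit α
  | natom : α → OLit α
  | nnatom : α → OLit α

/-- Literals: objective literals and subjective literals `K l`, `not K l`, `not not K l`. -/
inductive Lit (α : Type) : Type
  | obj : OLit α → Lit α
  | k : OLit α → Lit α
  | nk : OLit α → Lit α
  | nnk : OLit α → Lit α

/-- A rule `l₁ ∨ … ∨ lₘ ← L₁, …, Lₙ`. -/
structure Rule (α : Type) : Type where
  head : List (OLit α)
  body : List (Lit α)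

namespace Rule

variable {α : Type}

def OLitToF : OLit α → Formula α
  | .otop => Formula.top
  | .obot => Formula.bot
  | .atom a => Formula.atom a
  | .natom a => Formula.neg (Formula.atom a)
  | .nnatom a => Formula.neg (Formula.neg (Formula.atom a))

def LitToF : Lit α → Formula α
  | .obj l => OLitToF l
  | .k l => Formula.K (OLitToF l)
  | .nk l => Formula.neg (Formula.K (OLitToF l))
  | .nnk l => Formula.neg (Formula.neg (Formula.K (OLitToF l)))

/-- a rule as the formula `head ← body` -/
def toF (r : Rule α) : Formula α :=
  Formula.imp (r.body.foldr (fun L G => Formula.and (LitToF L) G) Formula.top)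
              (r.head.foldr (fun l G => Formula.or (OLitToF l) G) Formula.bot)

def OLitAtoms : OLit α → Set α
  | .otop => ∅
  | .obot => ∅
  | .atom a => {a}
  | .natom a => {a}
  | .nnatom a => {a}

def LitAtoms : Lit α → Set α
  | .obj l => OLitAtoms l
  | .k l => OLitAtoms l
  | .nk l => OLitAtoms l
  | .nnk l => OLitAtoms l

/-- all atoms occurring in a rule -/
def atoms (r : Rule α) : Set α :=
  {a | ∃ l ∈ r.head, a ∈ OLitAtoms l} ∪ {a | ∃ L ∈ r.body, a ∈ LitAtoms L}

/-- atoms occurring in the head -/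
def headAtoms (r : Rule α) : Set α := {a | ∃ l ∈ r.head, a ∈ OLitAtoms l}

/-- atoms occurring in objective literals of the body -/
def bodyObjAtoms (r : Rule α) : Set α :=
  {a | ∃ l : OLit α, Lit.obj l ∈ r.body ∧ a ∈ OLitAtoms l}

def isSubj : Lit α → Prop
  | .obj _ => False
  | _ => True

/-- a subjective constraint: empty head and only subjective body literals -/
def isSubjConstraint (r : Rule α) : Prop :=
  r.head = [] ∧ ∀ L ∈ r.body, isSubj L

/-- an objective rule: no subjective body literals -/
def isObjective (r : Rule α) : Prop := ∀ L ∈ r.body, ¬ isSubj L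

end Rule

namespace Rule

variable {α : Type}

/-- `U` is an epistemic splitting set of Π -/
def splittingSet (U : Set α) (P : Set (Rule α)) : Prop :=
  ∀ r ∈ P, r.atoms ⊆ U ∨ (r.headAtoms ∪ r.bodyObjAtoms) ∩ U = ∅

/-- the subjective reduct of a literal w.r.t. `W` and signature `U` -/
noncomputable def litReduct (W : Set (Set α)) (U : Set α) (L : Lit α) : Lit α :=
  if isSubj L ∧ LitAtoms L ⊆ U then
    (if Formula.wsat W (LitToF L) then Lit.obj OLit.otop else Lit.obj OLit.obot)
  else L

/-- the subjective reduct `E_U(T, W)` of the top program -/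
noncomputable def eReduct (W : Set (Set α)) (U : Set α) (T : Set (Rule α)) : Set (Rule α) :=
  (fun r : Rule α => Rule.mk r.head (r.body.map (litReduct W U))) '' T

/-- join of world views -/
def joinW (Wb Wt : Set (Set α)) : Set (Set α) :=
  {I | ∃ Ib ∈ Wb, ∃ It ∈ Wt, I = Ib ∪ It}

end Rule

/-- a semantics `S` satisfies epistemic splitting -/
def EpistemicSplitting {α : Type} (S : Set (Rule α) → Set (Set α) → Prop) : Prop :=
  ∀ (P : Set (Rule α)) (U : Set α), Rule.splittingSet U P →
    ∀ B T : Set (Rule α), B ∪ T = P → B ∩ T = ∅ →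
      (∀ r ∈ B, r.atoms ⊆ U) →
      (∀ r ∈ T, (r.headAtoms ∪ r.bodyObjAtoms) ∩ U = ∅) →
      ∀ W : Set (Set α),
        (S P W ↔ ∃ Wb Wt : Set (Set α),
            S B Wb ∧ S (Rule.eReduct Wb U T) Wt ∧ W = Rule.joinW Wb Wt)

/-- a semantics `S` is supra-ASP: on objective programs its world views are exactly the
(nonempty) collections of all stable models -/
def SupraASP {α : Type} (S : Set (Rule α) → Set (Set α) → Prop) : Prop :=
  ∀ P : Set (Rule α), (∀ r ∈ P, r.isObjective) →
    ∀ W : Set (Set α),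
      (S P W ↔ (W.Nonempty ∧ W = Formula.stableModels (Rule.toF '' P)))

/-- a semantics `S` satisfies subjective constraint monotonicity -/
def SubjConstraintMonotonicity {α : Type} (S : Set (Rule α) → Set (Set α) → Prop) : Prop :=
  ∀ (P C : Set (Rule α)), (∀ r ∈ C, r.isSubjConstraint) →
    ∀ W : Set (Set α),
      (S (P ∪ C) W ↔ (S P W ∧ ∀ r ∈ C, Formula.wsat W r.toF))

/-!
Split `B ∪ C` at the full signature with the subjective constraints `C` on top. The reduct
replaces each body literal of a constraint by `⊤` or `⊥` according to the bottom world view, so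
by supra-ASP the top has the single world view `{∅}` if every constraint body is refuted there
and none otherwise: the world views of `B ∪ C` are those of `B` refuting every constraint body.
For a nonempty world view, refuting the body is the same as satisfying the constraint, and no
world view is empty: adding `⊥ ← K ⊥` to the bottom of a splitting at `∅` keeps the world views,
while adding it to the top of a splitting at the full signature removes the empty one.
-/

namespace Formula

variable {α : Type}

theorem sat_foldr_and_iff (W : Set (Set α)) (I : Set α) (bs : List (Lit α)) :
    sat W I (bs.foldr (fun L G => and (Rule.LitToF L) G) top) ↔
      ∀ L ∈ bs, sat W I (Rule.LitToF L) := by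
  induction bs with
  | nil => simp [sat]
  | cons L bs ih => simp only [List.foldr_cons, sat, ih, List.forall_mem_cons]

theorem htSat_foldr_and_iff (H T : Set α) (bs : List (Lit α)) :
    htSat H T (bs.foldr (fun L G => and (Rule.LitToF L) G) top) ↔
      ∀ L ∈ bs, htSat H T (Rule.LitToF L) := by
  induction bs with
  | nil => simp [htSat]
  | cons L bs ih => simp only [List.foldr_cons, htSat, ih, List.forall_mem_cons]

theorem stableModels_eq_singleton_empty {Γ : Set (Formula α)}
    (h : ∀ F ∈ Γ, ∀ H T : Set α, htSat H T F) : stableModels Γ = {∅} := by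
  ext I
  simp only [stableModels, stableModel, Set.mem_ofPred_eq, Set.mem_singleton_iff]
  constructor
  · rintro ⟨-, hmin⟩
    by_contra hI
    obtain ⟨F, hF, hnot⟩ := hmin ∅ (Set.empty_ssubset.2 (Set.nonempty_iff_ne_empty.2 hI))
    exact hnot (h F hF ∅ I)
  · rintro rfl
    exact ⟨fun F hF => h F hF ∅ ∅, fun H hH => absurd (Set.subset_empty_iff.1 hH.subset) hH.ne⟩

theorem stableModels_eq_empty {Γ : Set (Formula α)} {F : Formula α} (hF : F ∈ Γ)
    (h : ∀ I : Set α, ¬ htSat I I F) : stableModels Γ = ∅ :=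
  Set.eq_empty_iff_forall_notMem.2 fun I hI => h I (hI.1 F hF)

end Formula

namespace Rule

variable {α : Type}

def BodyRefuted (W : Set (Set α)) (r : Rule α) : Prop :=
  ∃ L ∈ r.body, ¬ Formula.wsat W (LitToF L)

theorem sat_LitToF_congr {L : Lit α} (hL : isSubj L) (W : Set (Set α)) (I I' : Set α) :
    Formula.sat W I (LitToF L) ↔ Formula.sat W I' (LitToF L) := by
  cases L with
  | obj l => exact hL.elim
  | k l | nk l | nnk l => rfl

theorem sat_LitToF_iff_wsat {L : Lit α} (hL : isSubj L) {W : Set (Set α)} {I : Set α}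
    (hI : I ∈ W) : Formula.sat W I (LitToF L) ↔ Formula.wsat W (LitToF L) :=
  ⟨fun h I' _ => (sat_LitToF_congr hL W I I').1 h, fun h => h I hI⟩

theorem isSubjConstraint.wsat_toF_iff {r : Rule α} (hr : r.isSubjConstraint)
    {W : Set (Set α)} (hW : W.Nonempty) : Formula.wsat W r.toF ↔ BodyRefuted W r := by
  obtain ⟨I, hI⟩ := hW
  have hbody : ∀ I ∈ W, Formula.sat W I
      (r.body.foldr (fun L G => Formula.and (LitToF L) G) Formula.top) ↔
        ∀ L ∈ r.body, Formula.wsat W (LitToF L) := fun I hI => by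
    rw [Formula.sat_foldr_and_iff]
    exact forall₂_congr fun L hL => sat_LitToF_iff_wsat (hr.2 L hL) hI
  have hconstr : ∀ J ∈ W, Formula.sat W J r.toF ↔ ¬ ∀ L ∈ r.body, Formula.wsat W (LitToF L) :=
    fun J hJ => by rw [← (hbody J hJ).not, toF, hr.1]; rfl
  calc Formula.wsat W r.toF ↔ ∀ J ∈ W, ¬ ∀ L ∈ r.body, Formula.wsat W (LitToF L) :=
        forall₂_congr hconstr
    _ ↔ ¬ ∀ L ∈ r.body, Formula.wsat W (LitToF L) := ⟨fun h => h I hI, fun h _ _ => h⟩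
    _ ↔ BodyRefuted W r := by simp only [BodyRefuted, not_forall, exists_prop]

theorem isSubjConstraint.headAtoms_union_bodyObjAtoms {r : Rule α}
    (hr : r.isSubjConstraint) : r.headAtoms ∪ r.bodyObjAtoms = ∅ := by
  refine Set.eq_empty_iff_forall_notMem.2 ?_
  rintro a (⟨l, hl, -⟩ | ⟨l, hl, -⟩)
  · simp [hr.1] at hl
  · exact hr.2 _ hl

theorem litReduct_univ {L : Lit α} (hL : isSubj L) (W : Set (Set α)) :
    litReduct W Set.univ L =
      if Formula.wsat W (LitToF L) then Lit.obj OLit.otop else Lit.obj OLit.obot :=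
  if_pos ⟨hL, Set.subset_univ _⟩

theorem isObjective_of_mem_eReduct_univ {W : Set (Set α)} {T : Set (Rule α)} {r : Rule α}
    (hr : r ∈ eReduct W Set.univ T) : r.isObjective := by
  obtain ⟨r, -, rfl⟩ := hr
  intro L hL
  obtain ⟨L, -, rfl⟩ := List.mem_map.1 hL
  by_cases hL : isSubj L
  · rw [litReduct_univ hL]
    split_ifs <;> exact id
  · rwa [litReduct, if_neg (hL ·.1)]

theorem isSubjConstraint.htSat_toF_reduct_iff {r : Rule α} (hr : r.isSubjConstraint)
    (W : Set (Set α)) (H T : Set α) :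
    Formula.htSat H T (toF ⟨r.head, r.body.map (litReduct W Set.univ)⟩) ↔ BodyRefuted W r := by
  have hbody : ∀ H' T' : Set α, Formula.htSat H' T'
      ((r.body.map (litReduct W Set.univ)).foldr (fun L G => Formula.and (LitToF L) G)
        Formula.top) ↔ ∀ L ∈ r.body, Formula.wsat W (LitToF L) := fun H' T' => by
    rw [Formula.htSat_foldr_and_iff, List.forall_mem_map]
    refine forall₂_congr fun L hL => ?_
    rw [litReduct_univ (hr.2 L hL)]
    split_ifs with h
    · exact iff_of_true trivial h
    · exact iff_of_false id h
  simp only [toF, hr.1, List.foldr_nil, Formula.htSat, imp_false, hbody, and_self,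
    BodyRefuted, not_forall, exists_prop]

theorem stableModels_eReduct_univ {C : Set (Rule α)} (hC : ∀ r ∈ C, r.isSubjConstraint)
    (W : Set (Set α)) :
    Formula.stableModels (toF '' eReduct W Set.univ C) =
      if ∀ r ∈ C, BodyRefuted W r then {∅} else ∅ := by
  split_ifs with h
  · refine Formula.stableModels_eq_singleton_empty ?_
    rintro _ ⟨_, ⟨r, hr, rfl⟩, rfl⟩ H T
    exact ((hC r hr).htSat_toF_reduct_iff W H T).2 (h r hr)
  · push Not at h
    obtain ⟨r, hr, hnot⟩ := h
    exact Formula.stableModels_eq_empty ⟨_, ⟨r, hr, rfl⟩, rfl⟩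
      fun I => ((hC r hr).htSat_toF_reduct_iff W I I).not.2 hnot

theorem joinW_singleton_empty_right (W : Set (Set α)) : joinW W {∅} = W := by
  ext I
  simp [joinW]

theorem joinW_singleton_empty_left (W : Set (Set α)) : joinW {∅} W = W := by
  ext I
  simp [joinW]

theorem splittingSet_univ (P : Set (Rule α)) : splittingSet Set.univ P :=
  fun _ _ => .inl (Set.subset_univ _)

theorem splittingSet_empty (P : Set (Rule α)) : splittingSet ∅ P :=
  fun _ _ => .inr (Set.inter_empty _)

/-- The constraint `⊥ ← K ⊥`, violated exactly by the empty world view. -/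
def kBotConstraint (α : Type) : Rule α := ⟨[], [Lit.k OLit.obot]⟩

theorem isSubjConstraint_kBotConstraint : (kBotConstraint α).isSubjConstraint :=
  ⟨rfl, by simp [kBotConstraint, isSubj]⟩

theorem atoms_kBotConstraint : (kBotConstraint α).atoms = ∅ := by
  simp [kBotConstraint, atoms, LitAtoms, OLitAtoms]

theorem bodyRefuted_kBotConstraint_iff {W : Set (Set α)} :
    BodyRefuted W (kBotConstraint α) ↔ W.Nonempty := by
  simp [BodyRefuted, kBotConstraint, Formula.wsat, LitToF, OLitToF, Formula.sat,
    Set.Nonempty]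

end Rule

open Rule

section Semantics

variable {α : Type} {S : Set (Rule α) → Set (Set α) → Prop}

theorem SupraASP.worldView_empty_iff (hsupra : SupraASP S) {W : Set (Set α)} :
    S ∅ W ↔ W = {∅} := by
  rw [hsupra ∅ (fun _ h => h.elim) W, Set.image_empty,
    Formula.stableModels_eq_singleton_empty (fun _ h => h.elim)]
  exact ⟨And.right, fun h => ⟨h ▸ Set.singleton_nonempty _, h⟩⟩

theorem SupraASP.worldView_eReduct_univ_iff (hsupra : SupraASP S) {C : Set (Rule α)}
    (hC : ∀ r ∈ C, r.isSubjConstraint) {W Wt : Set (Set α)} :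
    S (eReduct W Set.univ C) Wt ↔ (∀ r ∈ C, BodyRefuted W r) ∧ Wt = {∅} := by
  rw [hsupra _ (fun _ => isObjective_of_mem_eReduct_univ) Wt, stableModels_eReduct_univ hC]
  split_ifs with h
  · exact ⟨fun h' => ⟨h, h'.2⟩, fun h' => ⟨h'.2 ▸ Set.singleton_nonempty _, h'.2⟩⟩
  · exact ⟨fun h' => absurd (h'.2 ▸ h'.1) Set.not_nonempty_empty, fun h' => (h h'.1).elim⟩

theorem EpistemicSplitting.worldView_union_subjConstraints (hsplit : EpistemicSplitting S)
    (hsupra : SupraASP S) {B C : Set (Rule α)} (hBC : B ∩ C = ∅)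
    (hC : ∀ r ∈ C, r.isSubjConstraint) (W : Set (Set α)) :
    S (B ∪ C) W ↔ S B W ∧ ∀ r ∈ C, BodyRefuted W r := by
  rw [hsplit (B ∪ C) Set.univ (splittingSet_univ _) B C rfl hBC
    (fun _ _ => Set.subset_univ _)
    (fun r hr => by rw [(hC r hr).headAtoms_union_bodyObjAtoms, Set.empty_inter]) W]
  simp only [hsupra.worldView_eReduct_univ_iff hC]
  constructor
  · rintro ⟨Wb, _, hWb, ⟨href, rfl⟩, rfl⟩
    rw [joinW_singleton_empty_right]
    exact ⟨hWb, href⟩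
  · rintro ⟨hW, href⟩
    exact ⟨W, {∅}, hW, ⟨href, rfl⟩, (joinW_singleton_empty_right W).symm⟩

theorem EpistemicSplitting.worldView_iff_eReduct_empty (hsplit : EpistemicSplitting S)
    (hsupra : SupraASP S) (P : Set (Rule α)) (W : Set (Set α)) :
    S P W ↔ S (eReduct {∅} ∅ P) W := by
  rw [hsplit P ∅ (splittingSet_empty P) ∅ P (Set.empty_union P) (Set.empty_inter P)
    (fun _ h => h.elim) (fun _ _ => Set.inter_empty _) W]
  constructor
  · rintro ⟨Wb, Wt, hWb, hWt, rfl⟩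
    rw [hsupra.worldView_empty_iff] at hWb
    subst hWb
    rwa [joinW_singleton_empty_left]
  · exact fun h =>
      ⟨{∅}, W, hsupra.worldView_empty_iff.2 rfl, h, (joinW_singleton_empty_left W).symm⟩

theorem EpistemicSplitting.worldView_union_kBotConstraint (hsplit : EpistemicSplitting S)
    (hsupra : SupraASP S) {P : Set (Rule α)} {W : Set (Set α)} (h : S P W) :
    S (P ∪ {kBotConstraint α}) W := by
  by_cases hc : kBotConstraint α ∈ P
  · rwa [Set.union_singleton, Set.insert_eq_of_mem hc]
  have hcstar : S {kBotConstraint α} {∅} := by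
    rw [← Set.empty_union {kBotConstraint α}, hsplit.worldView_union_subjConstraints hsupra
      (Set.empty_inter _) (by simpa using isSubjConstraint_kBotConstraint)]
    exact ⟨hsupra.worldView_empty_iff.2 rfl, by simp [bodyRefuted_kBotConstraint_iff]⟩
  rw [Set.union_comm, hsplit _ ∅ (splittingSet_empty _) {kBotConstraint α} P rfl
    (Set.singleton_inter_eq_empty.2 hc) (by simp [atoms_kBotConstraint])
    (fun _ _ => Set.inter_empty _) W]
  exact ⟨{∅}, W, hcstar, (hsplit.worldView_iff_eReduct_empty hsupra P W).1 h,
    (joinW_singleton_empty_left W).symm⟩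

theorem EpistemicSplitting.worldView_nonempty (hsplit : EpistemicSplitting S)
    (hsupra : SupraASP S) {P : Set (Rule α)} {W : Set (Set α)} (h : S P W) : W.Nonempty := by
  have hcstar := hsplit.worldView_union_kBotConstraint hsupra h
  rw [← Set.sdiff_union_self, hsplit.worldView_union_subjConstraints hsupra
    Set.sdiff_inter_self (by simpa using isSubjConstraint_kBotConstraint)] at hcstar
  exact bodyRefuted_kBotConstraint_iff.1 (hcstar.2 _ rfl)

end Semantics

/-- every (supra-ASP) semantics satisfying epistemic splitting satisfies
subjective constraint monotonicity. -/
theorem splitting_implies_constraint_monotonicity {α : Type}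
    (S : Set (Rule α) → Set (Set α) → Prop)
    (hsplit : EpistemicSplitting S) (hsupra : SupraASP S) :
    SubjConstraintMonotonicity S := by
  intro P C hC W
  have hunion : S (P ∪ C) W ↔ S (P \ C) W ∧ ∀ r ∈ C, BodyRefuted W r := by
    rw [← Set.sdiff_union_self]
    exact hsplit.worldView_union_subjConstraints hsupra Set.sdiff_inter_self hC W
  have hP : S P W ↔ S (P \ C) W ∧ ∀ r ∈ P ∩ C, BodyRefuted W r := by
    conv_lhs => rw [← Set.sdiff_union_inter P C]
    exact hsplit.worldView_union_subjConstraints hsupra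
      (Set.disjoint_iff_inter_eq_empty.1 (Set.disjoint_sdiff_left.mono_right
        Set.inter_subset_right)) (fun r hr => hC r hr.2) W
  have hsat (hW : S P W) : (∀ r ∈ C, Formula.wsat W r.toF) ↔ ∀ r ∈ C, BodyRefuted W r :=
    forall₂_congr fun r hr => (hC r hr).wsat_toF_iff (hsplit.worldView_nonempty hsupra hW)
  rw [hunion]
  constructor
  · rintro ⟨hdiff, href⟩
    have hW := hP.2 ⟨hdiff, fun r hr => href r hr.2⟩
    exact ⟨hW, (hsat hW).2 href⟩
  · rintro ⟨hW, hsatC⟩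
    exact ⟨(hP.1 hW).1, (hsat hW).1 hsatC⟩
end

section
/- Let Γ be a propositional modal theory, W an epistemic interpretation, and E = { φ : W ⊨ φ } the set of formulas satisfied by W (under KD45/S5-style satisfaction with belief set W). If W is an M85-world view of Γ (i.e., W = { I : ⟨W,I⟩ ⊨ Γ }), then E is a stable expansion of Γ: E equals the set of classical propositional consequences (treating each K φ as a fresh atom) of Γ ∪ { K φ : φ ∈ E } ∪ { ¬K φ : φ ∉ E }. -/
open scoped Classical

namespace Formula

variable {α : Type}

/-- Evaluation of a formula under a classical propositional valuation that treats each
formula `K φ` as a fresh propositional atom (valued by `k`). -/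
def evalV (i : α → Prop) (k : Formula α → Prop) : Formula α → Prop
  | .bot => False
  | .top => True
  | .atom a => i a
  | .and F G => evalV i k F ∧ evalV i k G
  | .or F G => evalV i k F ∨ evalV i k G
  | .imp F G => evalV i k F → evalV i k G
  | .K F => k F

/-- classical propositional consequences, with `K`-formulas treated as fresh atoms -/
def Cn (S : Set (Formula α)) : Set (Formula α) :=
  {F | ∀ (i : α → Prop) (k : Formula α → Prop),
        (∀ G ∈ S, evalV i k G) → evalV i k F}

end Formula

/-- if `W` is an M85-world view of Γ (i.e. `W = { I : ⟨W,I⟩ ⊨ Γ }`),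
then `E = { φ : W ⊨ φ }` is a stable expansion of Γ. -/
theorem m85wv_gives_stable_expansion {α : Type} (Γ : Set (Formula α))
    (W : Set (Set α)) (hW : W.Nonempty)
    (hwv : W = {I : Set α | ∀ F ∈ Γ, Formula.sat W I F})
    (E : Set (Formula α)) (hE : E = {F : Formula α | ∀ I ∈ W, Formula.sat W I F}) :
    E = Formula.Cn (Γ ∪ (Formula.K '' E) ∪
          ((fun F => Formula.neg (Formula.K F)) '' Eᶜ)) := by
  have key : ∀ (i : α → Prop) (k : Formula α → Prop),
      (∀ G, k G ↔ G ∈ E) → ∀ F, Formula.evalV i k F ↔ Formula.sat W {a | i a} F := by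
    intro i k hk F
    induction F with
    | bot => simp [Formula.evalV, Formula.sat]
    | top => simp [Formula.evalV, Formula.sat]
    | atom a => simp [Formula.evalV, Formula.sat]
    | and F G ihF ihG => simp [Formula.evalV, Formula.sat, ihF, ihG]
    | or F G ihF ihG => simp [Formula.evalV, Formula.sat, ihF, ihG]
    | imp F G ihF ihG => simp [Formula.evalV, Formula.sat, ihF, ihG]
    | K F ih =>
      simp only [Formula.evalV, Formula.sat, hk, hE, Set.mem_setOf_eq]
  ext F
  constructor
  · intro hF i k hS
    have hk : ∀ G, k G ↔ G ∈ E := by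
      intro G
      constructor
      · intro hkG
        by_contra hGE
        have := hS _ (Or.inr ⟨G, hGE, rfl⟩)
        simp [Formula.neg, Formula.evalV] at this
        exact this hkG
      · intro hGE
        exact hS _ (Or.inl (Or.inr ⟨G, hGE, rfl⟩))
    have hI : {a | i a} ∈ W := by
      rw [hwv]
      intro G hG
      exact (key i k hk G).mp (hS G (Or.inl (Or.inl hG)))
    rw [key i k hk F]
    rw [hE] at hF
    exact hF _ hI
  · intro hF
    rw [hE]
    intro I hI
    have hk : ∀ G, (· ∈ E) G ↔ G ∈ E := fun _ => Iff.rfl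
    have := hF (· ∈ I) (· ∈ E) ?_
    · have h2 := (key (· ∈ I) (· ∈ E) hk F).mp this
      simpa using h2
    · intro G hG
      rcases hG with (hG | ⟨φ, hφ, rfl⟩) | ⟨φ, hφ, rfl⟩
      · have : I ∈ W := hI
        rw [hwv] at this
        have h3 := this G hG
        exact (key (· ∈ I) (· ∈ E) hk G).mpr (by simpa using h3)
      · exact hφ
      · simpa [Formula.neg, Formula.evalV] using hφ
end

section
/- For the ground program Π = { p ∨ q ; s ← K p ; ⊥ ← not s }, there is no epistemic interpretation W that is a G94-world view of Π, whereas {{p,s}} is a G11-world view of Π. -/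
open scoped Classical

def sAtom : Formula ℕ := Formula.atom 2

/-- the program Π = { p ∨ q ; s ← K p ; ⊥ ← not s } -/
def progS : Set (Formula ℕ) :=
  {Formula.or pAtom qAtom,
   Formula.imp (Formula.K pAtom) sAtom,
   Formula.imp (Formula.neg sAtom) Formula.bot}

/-- The G11-reduct of Π w.r.t. `W`: the subjective literal `K p` (occurring positively)
is replaced by `p` if `W ⊨ K p` and by `⊥` otherwise; the remaining rules contain no
subjective literals. -/
noncomputable def g11ReductS (W : Set (Set ℕ)) : Set (Formula ℕ) :=
  {Formula.or pAtom qAtom,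
   Formula.imp (if Formula.wsat W (Formula.K pAtom) then pAtom else Formula.bot) sAtom,
   Formula.imp (Formula.neg sAtom) Formula.bot}

/-- G11-world views of Π -/
def G11wvS (W : Set (Set ℕ)) : Prop :=
  W.Nonempty ∧ W = Formula.stableModels (g11ReductS W)

/-- no epistemic interpretation is a G94-world view of Π, whereas
`{{p,s}}` is a G11-world view of Π. -/
theorem no_g94wv_but_g11wv :
    (¬ ∃ W : Set (Set ℕ), Formula.G94wv progS W) ∧
    G11wvS {({0, 2} : Set ℕ)} := by
  constructor
  · rintro ⟨W, hne, heq⟩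
    by_cases hc : ∀ I ∈ W, Formula.sat W I pAtom
    · have himg : (Formula.g94Reduct W) '' progS =
          {Formula.or pAtom qAtom,
           Formula.imp Formula.top sAtom,
           Formula.imp (Formula.imp sAtom Formula.bot) Formula.bot} := by
        simp [progS, Formula.g94Reduct, Formula.neg, hc, pAtom, qAtom, sAtom,
          Set.image_insert_eq]
        rw [if_pos (by simpa [pAtom] using hc)]
      have hmem : ({1, 2} : Set ℕ) ∈ W := by
        rw [heq]
        refine ⟨?_, ?_⟩
        · intro F hF
          rw [himg] at hF
          simp only [Set.mem_insert_iff, Set.mem_singleton_iff] at hF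
          rcases hF with rfl | rfl | rfl <;>
            simp [Formula.htSat, pAtom, qAtom, sAtom]
        · intro H hH
          by_cases h2 : (2 : ℕ) ∈ H
          · refine ⟨Formula.or pAtom qAtom, by rw [himg]; simp, ?_⟩
            have h0 : (0 : ℕ) ∉ H := fun h0 => by
              have := hH.1 h0; simp at this
            have h1 : (1 : ℕ) ∉ H := by
              intro h1
              exact hH.2 (by intro x hx; simp at hx; rcases hx with rfl | rfl <;> assumption)
            simp [Formula.htSat, pAtom, qAtom, h0, h1]
          · refine ⟨Formula.imp Formula.top sAtom, by rw [himg]; simp, ?_⟩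
            simp [Formula.htSat, sAtom, h2]
      have := hc _ hmem
      simp [Formula.sat, pAtom] at this
    · have himg : (Formula.g94Reduct W) '' progS =
          {Formula.or pAtom qAtom,
           Formula.imp Formula.bot sAtom,
           Formula.imp (Formula.imp sAtom Formula.bot) Formula.bot} := by
        simp [progS, Formula.g94Reduct, Formula.neg, hc, pAtom, qAtom, sAtom,
          Set.image_insert_eq]
        rw [if_neg (by simpa [pAtom] using hc)]
      obtain ⟨I, hI⟩ := hne
      have hst : Formula.stableModel ((Formula.g94Reduct W) '' progS) I := by
        have := hI; rw [heq] at this; exact this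
      obtain ⟨hsat, hmin⟩ := hst
      have hA := hsat (Formula.or pAtom qAtom) (by rw [himg]; simp)
      have hC := hsat (Formula.imp (Formula.imp sAtom Formula.bot) Formula.bot)
        (by rw [himg]; simp)
      have h2 : (2 : ℕ) ∈ I := by
        by_contra h
        simp [Formula.htSat, sAtom, h] at hC
      have h01 : (0 : ℕ) ∈ I ∨ (1 : ℕ) ∈ I := by
        simpa [Formula.htSat, pAtom, qAtom] using hA
      obtain ⟨F, hF, hbad⟩ := hmin (I \ {2}) (by
        exact Set.sdiff_singleton_ssubset.mpr h2)
      rw [himg] at hF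
      simp only [Set.mem_insert_iff, Set.mem_singleton_iff] at hF
      rcases hF with rfl | rfl | rfl
      · exact hbad (by simp [Formula.htSat, pAtom, qAtom]; tauto)
      · exact hbad (by simp [Formula.htSat, sAtom])
      · exact hbad (by simp [Formula.htSat, sAtom, h2])
  · constructor
    · exact ⟨_, rfl⟩
    · have hcond : Formula.wsat {({0, 2} : Set ℕ)} (Formula.K pAtom) := by
        intro I hI
        simp at hI; subst hI
        intro I' hI'
        simp at hI'; subst hI'
        simp [Formula.sat, pAtom]
      have hred : g11ReductS {({0, 2} : Set ℕ)} =
          {Formula.or pAtom qAtom,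
           Formula.imp pAtom sAtom,
           Formula.imp (Formula.neg sAtom) Formula.bot} := by
        simp [g11ReductS, hcond]
      rw [hred]
      ext I
      simp only [Set.mem_singleton_iff, Formula.stableModels, Set.mem_setOf_eq]
      constructor
      · rintro rfl
        refine ⟨?_, ?_⟩
        · intro F hF
          simp only [Set.mem_insert_iff, Set.mem_singleton_iff] at hF
          rcases hF with rfl | rfl | rfl <;>
            simp [Formula.htSat, Formula.neg, pAtom, qAtom, sAtom]
        · intro H hH
          by_cases h0 : (0 : ℕ) ∈ H
          · have h2 : (2 : ℕ) ∉ H := by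
              intro h2
              exact hH.2 (by intro x hx; simp at hx; rcases hx with rfl | rfl <;> assumption)
            refine ⟨Formula.imp pAtom sAtom, by simp, ?_⟩
            simp [Formula.htSat, pAtom, sAtom, h0, h2]
          · have h1 : (1 : ℕ) ∉ H := fun h1 => by
              have := hH.1 h1; simp at this
            refine ⟨Formula.or pAtom qAtom, by simp, ?_⟩
            simp [Formula.htSat, pAtom, qAtom, h0, h1]
      · rintro ⟨hsat, hmin⟩
        have hA := hsat (Formula.or pAtom qAtom) (by simp)
        have hB := hsat (Formula.imp pAtom sAtom) (by simp)
        have hC := hsat (Formula.imp (Formula.neg sAtom) Formula.bot) (by simp)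
        have h2 : (2 : ℕ) ∈ I := by
          by_contra h
          simp [Formula.htSat, Formula.neg, sAtom, h] at hC
        have h01 : (0 : ℕ) ∈ I ∨ (1 : ℕ) ∈ I := by
          simpa [Formula.htSat, pAtom, qAtom] using hA
        have h0 : (0 : ℕ) ∈ I := by
          by_contra h0
          have h1 : (1 : ℕ) ∈ I := h01.resolve_left h0
          obtain ⟨F, hF, hbad⟩ := hmin (I \ {2}) (Set.sdiff_singleton_ssubset.mpr h2)
          simp only [Set.mem_insert_iff, Set.mem_singleton_iff] at hF
          rcases hF with rfl | rfl | rfl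
          · exact hbad (by simp [Formula.htSat, pAtom, qAtom]; tauto)
          · exact hbad (by simp [Formula.htSat, pAtom, sAtom, h0])
          · exact hbad (by simp [Formula.htSat, Formula.neg, sAtom, h2])
        by_contra hne'
        have hss : ({0, 2} : Set ℕ) ⊂ I := by
          refine ⟨?_, ?_⟩
          · intro x hx; simp at hx; rcases hx with rfl | rfl <;> assumption
          · intro hsub
            exact hne' (Set.Subset.antisymm hsub
              (by intro x hx; simp at hx; rcases hx with rfl | rfl <;> assumption))
        obtain ⟨F, hF, hbad⟩ := hmin ({0, 2} : Set ℕ) hss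
        simp only [Set.mem_insert_iff, Set.mem_singleton_iff] at hF
        rcases hF with rfl | rfl | rfl
        · exact hbad (by simp [Formula.htSat, pAtom, qAtom])
        · exact hbad (by simp [Formula.htSat, pAtom, sAtom, h0, h2])
        · exact hbad (by simp [Formula.htSat, Formula.neg, sAtom, h2])
end

section
/- For the program Π = { p ← not K not p } (i.e., p ← M p under the convention M F := not K not F): {∅} is not a K15-world view of Π, while {{p}} is a K15-world view of Π; moreover both {∅} and {{p}} are G94-world views of Π. -/
open scoped Classical

/-- the program Π = { p ← not K not p }, i.e. { p ← M p } -/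
def progM : Set (Formula ℕ) := {Formula.imp (Formula.M pAtom) pAtom}


section Aux
open Formula

-- reduct targets
noncomputable def R1 : Formula ℕ := .imp (.imp (.imp (.atom 0) .bot) .bot) (.atom 0)  -- p ← not not p
noncomputable def R2 : Formula ℕ := .imp (.imp .bot .bot) (.atom 0)                  -- p ← not ⊥
noncomputable def R3 : Formula ℕ := .imp (.imp .top .bot) (.atom 0)                  -- p ← not ⊤

lemma condE : (∀ I ∈ ({(∅ : Set ℕ)} : Set (Set ℕ)), sat {(∅ : Set ℕ)} I ((atom 0).imp bot)) := by
  intro I hI; rw [Set.mem_singleton_iff] at hI; subst hI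
  simp [sat]

lemma condZ : ¬ (∀ I ∈ ({({0} : Set ℕ)} : Set (Set ℕ)), sat {({0} : Set ℕ)} I ((atom 0).imp bot)) := by
  intro h
  have := h {0} rfl
  simp [sat] at this

lemma k15_reduct_empty :
    (k15Reduct {(∅ : Set ℕ)}) '' progM = {R1} := by
  rw [progM, Set.image_singleton]
  congr 1
  simp only [Formula.M, neg, pAtom, k15Reduct, R1]
  rw [if_pos condE]

lemma k15_reduct_zero :
    (k15Reduct {({0} : Set ℕ)}) '' progM = {R2} := by
  rw [progM, Set.image_singleton]
  congr 1
  simp only [Formula.M, neg, pAtom, k15Reduct, R2]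
  rw [if_neg condZ]

lemma g94_reduct_empty :
    (g94Reduct {(∅ : Set ℕ)}) '' progM = {R3} := by
  rw [progM, Set.image_singleton]
  congr 1
  simp only [Formula.M, neg, pAtom, g94Reduct, R3]
  rw [if_pos condE]

lemma g94_reduct_zero :
    (g94Reduct {({0} : Set ℕ)}) '' progM = {R2} := by
  rw [progM, Set.image_singleton]
  congr 1
  simp only [Formula.M, neg, pAtom, g94Reduct, R2]
  rw [if_neg condZ]

lemma stable_singleton {R : Formula ℕ} {I : Set ℕ} :
    stableModel {R} I ↔ (htSat I I R ∧ ∀ H : Set ℕ, H ⊂ I → ¬ htSat H I R) := by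
  simp [stableModel]

lemma ssub_zero {H : Set ℕ} (h : H ⊂ ({0} : Set ℕ)) : H = ∅ :=
  Set.ssubset_singleton_iff.mp h

-- {0} is a stable model of {R1}
lemma zero_stable_R1 : stableModel {R1} ({0} : Set ℕ) := by
  rw [stable_singleton]
  constructor
  · simp [R1, htSat]
  · intro H hH
    have hE := ssub_zero hH
    subst hE
    simp [R1, htSat]

-- stable models of {R2} = {{0}}
lemma stable_R2 : stableModels {R2} = {({0} : Set ℕ)} := by
  ext I
  simp only [stableModels, Set.mem_setOf_eq, Set.mem_singleton_iff, stable_singleton]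
  constructor
  · rintro ⟨h1, h2⟩
    have h0 : (0 : ℕ) ∈ I := by
      simpa [R2, htSat] using h1
    by_contra hne
    have hss : ({0} : Set ℕ) ⊂ I :=
      ⟨Set.singleton_subset_iff.2 h0, fun hIs => hne ((Set.singleton_subset_iff.2 h0).antisymm hIs).symm⟩
    exact h2 {0} hss (by simp [R2, htSat, h0])
  · rintro rfl
    refine ⟨by simp [R2, htSat], ?_⟩
    intro H hH
    have hE := ssub_zero hH
    subst hE
    simp [R2, htSat]

-- stable models of {R3} = {∅}
lemma stable_R3 : stableModels {R3} = {(∅ : Set ℕ)} := by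
  ext I
  simp only [stableModels, Set.mem_setOf_eq, Set.mem_singleton_iff, stable_singleton]
  constructor
  · rintro ⟨h1, h2⟩
    by_contra hne
    have : (∅ : Set ℕ) ⊂ I := (Set.empty_ssubset).2 (Set.nonempty_iff_ne_empty.2 hne)
    exact h2 ∅ this (by simp [R3, htSat])
  · rintro rfl
    refine ⟨by simp [R3, htSat], ?_⟩
    intro H hH
    exact absurd (Set.subset_empty_iff.mp hH.subset) hH.ne

end Aux

/-- `{∅}` is not a K15-world view of Π while `{{p}}` is;
moreover both `{∅}` and `{{p}}` are G94-world views of Π. -/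
theorem k15_vs_g94_on_M :
    ¬ Formula.K15wv progM {(∅ : Set ℕ)} ∧
    Formula.K15wv progM {({0} : Set ℕ)} ∧
    Formula.G94wv progM {(∅ : Set ℕ)} ∧
    Formula.G94wv progM {({0} : Set ℕ)} := by
  refine ⟨?_, ?_, ?_, ?_⟩
  · rintro ⟨-, hW⟩
    rw [k15_reduct_empty] at hW
    have h0 : ({0} : Set ℕ) ∈ Formula.stableModels {R1} := zero_stable_R1
    rw [← hW, Set.mem_singleton_iff] at h0
    exact absurd h0 (by simp [Set.eq_empty_iff_forall_notMem])
  · exact ⟨⟨{0}, rfl⟩, by rw [k15_reduct_zero, stable_R2]⟩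
  · exact ⟨⟨∅, rfl⟩, by rw [g94_reduct_empty, stable_R3]⟩
  · exact ⟨⟨{0}, rfl⟩, by rw [g94_reduct_zero, stable_R2]⟩
end

section
/- For the program Π = { p ← not K not q, not q ; q ← not K not p, not p }, the epistemic interpretations W1 = {{p},{q}} and W2 = {∅} are both K15-world views; and W1 is the unique S16-world view of Π, since Φ_{W1} = {not K not p, not K not q} strictly contains Φ_{W2} = ∅. -/
open scoped Classical

/-- the program Π = { p ← not K not q, not q ; q ← not K not p, not p } -/
def progS16 : Set (Formula ℕ) :=
  {Formula.imp (Formula.and (Formula.neg (Formula.K (Formula.neg qAtom))) (Formula.neg qAtom)) pAtom,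
   Formula.imp (Formula.and (Formula.neg (Formula.K (Formula.neg pAtom))) (Formula.neg pAtom)) qAtom}

/-- `E_Π` = { not K not p , not K not q } -/
def EPi : Set (Formula ℕ) :=
  {Formula.neg (Formula.K (Formula.neg pAtom)), Formula.neg (Formula.K (Formula.neg qAtom))}

/-- `Φ_W` -/
def Phi (W : Set (Set ℕ)) : Set (Formula ℕ) := {L ∈ EPi | Formula.wsat W L}

/-- S16-world views of Π: K15-world views maximizing `Φ` -/
def S16wv (W : Set (Set ℕ)) : Prop :=
  Formula.K15wv progS16 W ∧
  ∀ W' : Set (Set ℕ), Formula.K15wv progS16 W' → ¬ Phi W ⊂ Phi W'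

/-! ### Auxiliary material -/

open Formula

/-- reduct rule `p ← ¬⊥, not q` -/
def r1D : Formula ℕ :=
  .imp (.and (.imp .bot .bot) (.imp (.atom 1) .bot)) (.atom 0)
/-- reduct rule `q ← ¬⊥, not p` -/
def r2D : Formula ℕ :=
  .imp (.and (.imp .bot .bot) (.imp (.atom 0) .bot)) (.atom 1)
/-- reduct rule `p ← not not q, not q` -/
def r1A : Formula ℕ :=
  .imp (.and (.imp (.imp (.atom 1) .bot) .bot) (.imp (.atom 1) .bot)) (.atom 0)
/-- reduct rule `q ← not not p, not p` -/
def r2A : Formula ℕ :=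
  .imp (.and (.imp (.imp (.atom 0) .bot) .bot) (.imp (.atom 0) .bot)) (.atom 1)

lemma ht_r1D (H I : Set ℕ) :
    htSat H I r1D ↔ ((1 ∉ H ∧ 1 ∉ I → 0 ∈ H) ∧ (1 ∉ I → 0 ∈ I)) := by
  simp [r1D, htSat]

lemma ht_r2D (H I : Set ℕ) :
    htSat H I r2D ↔ ((0 ∉ H ∧ 0 ∉ I → 1 ∈ H) ∧ (0 ∉ I → 1 ∈ I)) := by
  simp [r2D, htSat]

lemma ht_r1A (H I : Set ℕ) : htSat H I r1A := by
  simp [r1A, htSat]; tauto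

lemma ht_r2A (H I : Set ℕ) : htSat H I r2A := by
  simp [r2A, htSat]; tauto

lemma sd_iff (I : Set ℕ) :
    stableModel {r1D, r2D} I ↔ I = {0} ∨ I = {1} := by
  constructor
  · rintro ⟨hsat, hmin⟩
    have h1 := (ht_r1D I I).mp (hsat r1D (by left; rfl))
    have h2 := (ht_r2D I I).mp (hsat r2D (by right; rfl))
    by_cases h0 : (0 : ℕ) ∈ I
    · by_cases h1' : (1 : ℕ) ∈ I
      · exfalso
        obtain ⟨F, hF, hnF⟩ := hmin (I \ {0}) ⟨Set.diff_subset, fun hsub => by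
          have := hsub h0; simp at this⟩
        rcases hF with rfl | rfl
        · exact hnF ((ht_r1D _ _).mpr ⟨fun h => absurd h1' h.2, fun h => absurd h1' h⟩)
        · exact hnF ((ht_r2D _ _).mpr ⟨fun h => absurd h0 h.2, fun h => absurd h0 h⟩)
      · left
        refine Set.Subset.antisymm ?_ (by simpa using h0)
        by_contra hns
        obtain ⟨F, hF, hnF⟩ := hmin {0}
          ⟨by simpa using h0, fun hsub => hns (hsub.trans (by rfl))⟩
        rcases hF with rfl | rfl
        · exact hnF ((ht_r1D _ _).mpr ⟨fun _ => rfl, fun _ => h0⟩)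
        · exact hnF ((ht_r2D _ _).mpr ⟨fun h => absurd rfl h.1, fun h => absurd h0 h⟩)
    · right
      have h1'' : (1 : ℕ) ∈ I := h2.2 h0
      refine Set.Subset.antisymm ?_ (by simpa using h1'')
      by_contra hns
      obtain ⟨F, hF, hnF⟩ := hmin {1}
        ⟨by simpa using h1'', fun hsub => hns (hsub.trans (by rfl))⟩
      rcases hF with rfl | rfl
      · exact hnF ((ht_r1D _ _).mpr ⟨fun h => absurd h1'' h.2, fun h => absurd h1'' h⟩)
      · exact hnF ((ht_r2D _ _).mpr ⟨fun _ => rfl, fun _ => h1''⟩)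
  · rintro (rfl | rfl)
    · refine ⟨?_, ?_⟩
      · rintro F (rfl | rfl)
        · exact (ht_r1D _ _).mpr ⟨fun _ => rfl, fun _ => rfl⟩
        · exact (ht_r2D _ _).mpr ⟨fun h => absurd rfl h.1, fun h => absurd rfl h⟩
      · intro H hH
        have hH0 : (0 : ℕ) ∉ H := fun h =>
          hH.2 (by intro x hx; simp at hx; simpa [hx] using h)
        refine ⟨r1D, by left; rfl, fun hc => ?_⟩
        have := ((ht_r1D _ _).mp hc).1
          ⟨fun h => by simpa using hH.1 h, by simp⟩
        exact hH0 this
    · refine ⟨?_, ?_⟩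
      · rintro F (rfl | rfl)
        · exact (ht_r1D _ _).mpr ⟨fun h => absurd rfl h.1, fun h => absurd rfl h⟩
        · exact (ht_r2D _ _).mpr ⟨fun _ => rfl, fun _ => rfl⟩
      · intro H hH
        have hH1 : (1 : ℕ) ∉ H := fun h =>
          hH.2 (by intro x hx; simp at hx; simpa [hx] using h)
        refine ⟨r2D, by right; rfl, fun hc => ?_⟩
        have := ((ht_r2D _ _).mp hc).1
          ⟨fun h => by simpa using hH.1 h, by simp⟩
        exact hH1 this

lemma sa_iff (I : Set ℕ) :
    stableModel {r1A, r2A} I ↔ I = ∅ := by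
  constructor
  · rintro ⟨_, hmin⟩
    by_contra hne
    obtain ⟨F, hF, hnF⟩ := hmin ∅
      ⟨Set.empty_subset _, fun hsub => hne (Set.eq_empty_iff_forall_notMem.mpr
        fun x hx => by simpa using hsub hx)⟩
    rcases hF with rfl | rfl
    · exact hnF (ht_r1A _ _)
    · exact hnF (ht_r2A _ _)
  · rintro rfl
    refine ⟨?_, ?_⟩
    · rintro F (rfl | rfl)
      · exact ht_r1A _ _
      · exact ht_r2A _ _
    · intro H hH
      exact absurd (Set.empty_subset H) hH.2

lemma reduct_img_D (W : Set (Set ℕ))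
    (hp : ¬ ∀ I ∈ W, Formula.sat W I (Formula.neg pAtom))
    (hq : ¬ ∀ I ∈ W, Formula.sat W I (Formula.neg qAtom)) :
    (Formula.k15Reduct W) '' progS16 = {r1D, r2D} := by
  have hp' : ¬ ∀ I ∈ W, Formula.sat W I (Formula.imp pAtom Formula.bot) := hp
  have hq' : ¬ ∀ I ∈ W, Formula.sat W I (Formula.imp qAtom Formula.bot) := hq
  rw [progS16, Set.image_insert_eq, Set.image_singleton]
  simp only [k15Reduct, Formula.neg, if_neg hp', if_neg hq']
  rfl

lemma reduct_img_A (W : Set (Set ℕ))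
    (hp : ∀ I ∈ W, Formula.sat W I (Formula.neg pAtom))
    (hq : ∀ I ∈ W, Formula.sat W I (Formula.neg qAtom)) :
    (Formula.k15Reduct W) '' progS16 = {r1A, r2A} := by
  have hp' : ∀ I ∈ W, Formula.sat W I (Formula.imp pAtom Formula.bot) := hp
  have hq' : ∀ I ∈ W, Formula.sat W I (Formula.imp qAtom Formula.bot) := hq
  rw [progS16, Set.image_insert_eq, Set.image_singleton]
  simp only [k15Reduct, Formula.neg, if_pos hp', if_pos hq']
  rfl

lemma k15_W1 : Formula.K15wv progS16 {({0} : Set ℕ), ({1} : Set ℕ)} := by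
  constructor
  · exact ⟨{0}, by left; rfl⟩
  · rw [reduct_img_D]
    · ext I
      simp only [stableModels, Set.mem_setOf_eq, sd_iff]
      simp [Set.mem_insert_iff]
    · intro h
      have := h {0} (by left; rfl)
      simp [Formula.sat, pAtom, Formula.neg] at this
    · intro h
      have := h {1} (by right; rfl)
      simp [Formula.sat, qAtom, Formula.neg] at this

lemma k15_W2 : Formula.K15wv progS16 {(∅ : Set ℕ)} := by
  constructor
  · exact ⟨∅, rfl⟩
  · rw [reduct_img_A]
    · ext I
      simp only [stableModels, Set.mem_setOf_eq, sa_iff]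
      simp
    · rintro I rfl
      simp [Formula.sat, pAtom, Formula.neg]
    · rintro I rfl
      simp [Formula.sat, qAtom, Formula.neg]

lemma phi_W1 : Phi {({0} : Set ℕ), ({1} : Set ℕ)} = EPi := by
  apply Set.Subset.antisymm (fun L hL => hL.1)
  intro L hL
  refine ⟨hL, ?_⟩
  rcases hL with rfl | rfl
  · intro I _ hK
    have := hK {0} (by left; rfl)
    simp [Formula.sat, pAtom, Formula.neg] at this
  · intro I _ hK
    have := hK {1} (by right; rfl)
    simp [Formula.sat, qAtom, Formula.neg] at this

lemma phi_W2 : Phi {(∅ : Set ℕ)} = ∅ := by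
  ext L
  simp only [Phi, Set.mem_setOf_eq, Set.mem_empty_iff_false, iff_false]
  rintro ⟨hL, hw⟩
  rcases hL with rfl | rfl
  · have := hw ∅ rfl
    exact this (by rintro I rfl; simp [Formula.sat, pAtom, Formula.neg])
  · have := hw ∅ rfl
    exact this (by rintro I rfl; simp [Formula.sat, qAtom, Formula.neg])

lemma phi_sub (W : Set (Set ℕ)) : Phi W ⊆ EPi := fun _ h => h.1

/-- `W1 = {{p},{q}}` and `W2 = {∅}` are both K15-world views of Π;
`Φ_{W1} = E_Π` strictly contains `Φ_{W2} = ∅`; and `W1` is the unique S16-world view. -/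


theorem k15_and_s16_worldviews :
    Formula.K15wv progS16 {({0} : Set ℕ), ({1} : Set ℕ)} ∧
    Formula.K15wv progS16 {(∅ : Set ℕ)} ∧
    Phi {({0} : Set ℕ), ({1} : Set ℕ)} = EPi ∧
    Phi {(∅ : Set ℕ)} = ∅ ∧
    Phi {(∅ : Set ℕ)} ⊂ Phi {({0} : Set ℕ), ({1} : Set ℕ)} ∧
    (∀ W : Set (Set ℕ), S16wv W ↔ W = {({0} : Set ℕ), ({1} : Set ℕ)}) := by
  refine ⟨k15_W1, k15_W2, phi_W1, phi_W2, ?_, ?_⟩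
  · rw [phi_W1, phi_W2]
    exact (Set.ssubset_iff_of_subset (Set.empty_subset _)).mpr
      ⟨_, Or.inl rfl, by simp⟩
  · intro W
    constructor
    · rintro ⟨hk, hmax⟩
      have hPhi : Phi W = EPi := by
        by_contra hne
        exact hmax _ k15_W1 (by rw [phi_W1]; exact (phi_sub W).ssubset_of_ne hne)
      obtain ⟨I0, hI0⟩ := hk.1
      have hp : ¬ ∀ I ∈ W, Formula.sat W I (Formula.neg pAtom) := by
        have hm : Formula.neg (Formula.K (Formula.neg pAtom)) ∈ Phi W := by
          rw [hPhi]; left; rfl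
        exact hm.2 I0 hI0
      have hq : ¬ ∀ I ∈ W, Formula.sat W I (Formula.neg qAtom) := by
        have hm : Formula.neg (Formula.K (Formula.neg qAtom)) ∈ Phi W := by
          rw [hPhi]; right; rfl
        exact hm.2 I0 hI0
      have := hk.2
      rw [reduct_img_D W hp hq] at this
      rw [this]
      ext I
      simp only [stableModels, Set.mem_setOf_eq, sd_iff]
      simp [Set.mem_insert_iff]
    · rintro rfl
      refine ⟨k15_W1, fun W' _ h => ?_⟩
      rw [phi_W1] at h
      exact h.2 (phi_sub W')
end
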